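/- Suppose $\phi(w, \cdot)$ satisfies $-\langle w' - w'_*, \nabla_{w'}\phi(w,w')\rangle \ge \lambda\|w'-w'_*\|^2$ where $w'_* = w'(w)$ is the closest maximizer, $\nabla_{w'}\phi(w,\cdot)$ is $L_\phi$-Lipschitz, and the stochastic ascent direction $v$ satisfies $\mathbb{E}[v] = \nabla_{w'}\phi(w,w')$ and $\mathbb{E}\|v - \nabla_{w'}\phi(w,w')\|^2 \le \frac{\sigma^2}{2m}$. Then for $w'_+ = w' + \eta' v$ with $\eta' \le \lambda/(2L_\phi^2)$: $\mathbb{E}\|w'_+ - w'(w)\|^2 \le (1-\frac{\eta'\lambda}{2})\|w' - w'(w)\|^2 + \frac{\eta'^2\sigma^2}{2m}$. -/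
import Mathlib


open MeasureTheory Real InnerProductSpace

set_option maxHeartbeats 1600000 in
/-- Stochastic one-step contraction of the dual iterate: under one-point strong
convexity of `-φ(w,·)`, Lipschitzness of the partial gradient, an unbiased
ascent direction `v` with variance at most `σ²/(2m)`, and `η' ≤ λ/(2L_φ²)`,
`𝔼‖w' + η'v - w'(w)‖² ≤ (1 - η'λ/2)‖w' - w'(w)‖² + η'²σ²/(2m)`. -/
theorem stmt_19 {Ω : Type*} [MeasurableSpace Ω] (μ : Measure Ω)
    [IsProbabilityMeasure μ] {d' : ℕ}
    (φ : EuclideanSpace ℝ (Fin d') → ℝ)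
    (G : EuclideanSpace ℝ (Fin d') → EuclideanSpace ℝ (Fin d'))
    (lam Lφ η' σ : ℝ) (m : ℕ) (hm : 0 < m)
    (hlam : 0 < lam) (hLφ : 0 < Lφ) (hσ : 0 ≤ σ)
    (hη'pos : 0 < η') (hη' : η' ≤ lam / (2 * Lφ ^ 2))
    (hgrad : ∀ u, HasGradientAt φ (G u) u)
    (hlip : LipschitzWith (Real.toNNReal Lφ) G)
    (w' wstar : EuclideanSpace ℝ (Fin d'))
    (hstar : G wstar = 0)
    (hopsc : ⟪w' - wstar, G w'⟫_ℝ ≤ -lam * ‖w' - wstar‖ ^ 2)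
    (v : Ω → EuclideanSpace ℝ (Fin d'))
    (hvint : Integrable v μ)
    (hvint2 : Integrable (fun ω => ‖v ω - G w'‖ ^ 2) μ)
    (hunbiased : ∫ ω, v ω ∂μ = G w')
    (hvar : ∫ ω, ‖v ω - G w'‖ ^ 2 ∂μ ≤ σ ^ 2 / (2 * m)) :
    ∫ ω, ‖(w' + η' • v ω) - wstar‖ ^ 2 ∂μ ≤
      (1 - η' * lam / 2) * ‖w' - wstar‖ ^ 2 + η' ^ 2 * σ ^ 2 / (2 * m) := by
  set a := w' - wstar with ha
  set g := G w' with hg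
  set c := a + η' • g with hc
  -- pointwise expansion
  have key : ∀ ω, ‖(w' + η' • v ω) - wstar‖ ^ 2
      = ‖c‖ ^ 2 + (2 * ⟪c, η' • (v ω - g)⟫_ℝ + η' ^ 2 * ‖v ω - g‖ ^ 2) := by
    intro ω
    have hvec : (w' + η' • v ω) - wstar = c + η' • (v ω - g) := by
      rw [hc, ha]; module
    have h2 : ‖η' • (v ω - g)‖ ^ 2 = η' ^ 2 * ‖v ω - g‖ ^ 2 := by
      rw [norm_smul]; simp [mul_pow, sq_abs]
    rw [hvec, norm_add_sq_real, h2]; ring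
  -- integrability
  have hsmulint : Integrable (fun ω => η' • (v ω - g)) μ := by
    exact (hvint.sub (integrable_const g)).smul η'
  have hinnerint : Integrable (fun ω => ⟪c, η' • (v ω - g)⟫_ℝ) μ :=
    hsmulint.const_inner c
  have hnormint : Integrable (fun ω => η' ^ 2 * ‖v ω - g‖ ^ 2) μ :=
    hvint2.const_mul _
  -- compute the integral
  have hsplit : ∫ ω, ‖(w' + η' • v ω) - wstar‖ ^ 2 ∂μ
      = ‖c‖ ^ 2 + (∫ ω, 2 * ⟪c, η' • (v ω - g)⟫_ℝ ∂μ
        + ∫ ω, η' ^ 2 * ‖v ω - g‖ ^ 2 ∂μ) := by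
    have hsum : Integrable (fun ω => 2 * ⟪c, η' • (v ω - g)⟫_ℝ
        + η' ^ 2 * ‖v ω - g‖ ^ 2) μ := by
      exact (hinnerint.const_mul 2).add hnormint
    have h2int : Integrable (fun ω => 2 * ⟪c, η' • (v ω - g)⟫_ℝ) μ :=
      hinnerint.const_mul 2
    simp_rw [key]
    rw [integral_add (integrable_const _) hsum, integral_add h2int hnormint]
    simp
  have hzero : ∫ ω, 2 * ⟪c, η' • (v ω - g)⟫_ℝ ∂μ = 0 := by
    rw [integral_const_mul]
    rw [integral_inner hsmulint c, integral_smul,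
      integral_sub hvint (integrable_const g), hunbiased]
    simp
  have hvarbound : ∫ ω, η' ^ 2 * ‖v ω - g‖ ^ 2 ∂μ ≤ η' ^ 2 * σ ^ 2 / (2 * m) := by
    rw [integral_const_mul]
    have := mul_le_mul_of_nonneg_left hvar (sq_nonneg η')
    calc η' ^ 2 * ∫ ω, ‖v ω - g‖ ^ 2 ∂μ ≤ η' ^ 2 * (σ ^ 2 / (2 * m)) := this
      _ = η' ^ 2 * σ ^ 2 / (2 * m) := by ring
  -- deterministic bound on ‖c‖²
  have hga : ‖g‖ ≤ Lφ * ‖a‖ := by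
    have := hlip.dist_le_mul w' wstar
    rw [dist_eq_norm, dist_eq_norm] at this
    rw [hg, ha]
    calc ‖G w'‖ = ‖G w' - G wstar‖ := by rw [hstar, sub_zero]
      _ ≤ Lφ.toNNReal * ‖w' - wstar‖ := this
      _ = Lφ * ‖w' - wstar‖ := by rw [Real.coe_toNNReal _ hLφ.le]
  have hg2 : ‖g‖ ^ 2 ≤ Lφ ^ 2 * ‖a‖ ^ 2 := by
    have h1 : ‖g‖ ^ 2 ≤ (Lφ * ‖a‖) ^ 2 := by
      apply pow_le_pow_left₀ (norm_nonneg _) hga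
    nlinarith
  have hcbound : ‖c‖ ^ 2 ≤ (1 - η' * lam / 2) * ‖a‖ ^ 2 := by
    have hexp : ‖c‖ ^ 2 = ‖a‖ ^ 2 + 2 * η' * ⟪a, g⟫_ℝ + η' ^ 2 * ‖g‖ ^ 2 := by
      rw [hc, norm_add_sq_real, real_inner_smul_right, norm_smul]
      simp only [Real.norm_eq_abs, mul_pow, sq_abs]
      ring
    have hηL : η' * (2 * Lφ ^ 2) ≤ lam := by
      rw [div_eq_mul_inv] at hη'
      have h2L : (0:ℝ) < 2 * Lφ ^ 2 := by positivity
      calc η' * (2 * Lφ ^ 2) ≤ lam * (2 * Lφ ^ 2)⁻¹ * (2 * Lφ ^ 2) :=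
            mul_le_mul_of_nonneg_right hη' h2L.le
        _ = lam := by field_simp
    have h1 : η' * ⟪a, g⟫_ℝ ≤ η' * (-lam * ‖a‖ ^ 2) :=
      mul_le_mul_of_nonneg_left hopsc hη'pos.le
    have h2 : η' ^ 2 * ‖g‖ ^ 2 ≤ η' ^ 2 * (Lφ ^ 2 * ‖a‖ ^ 2) :=
      mul_le_mul_of_nonneg_left hg2 (sq_nonneg η')
    have h3 : η' ^ 2 * (Lφ ^ 2 * ‖a‖ ^ 2) ≤ η' * lam / 2 * ‖a‖ ^ 2 := by
      have h4 : (0:ℝ) ≤ η' / 2 * ‖a‖ ^ 2 := by positivity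
      have h5 := mul_le_mul_of_nonneg_right hηL h4
      nlinarith [h5]
    have h6 : (0:ℝ) ≤ η' * lam * ‖a‖ ^ 2 := by positivity
    linarith [hexp, h1, h2, h3, h6]
  rw [hsplit, hzero]
  have : (0:ℝ) + ∫ ω, η' ^ 2 * ‖v ω - g‖ ^ 2 ∂μ ≤ η' ^ 2 * σ ^ 2 / (2 * m) := by
    simpa using hvarbound
  linarith
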